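/- Optimality criterion via level-crossing: define the stopping times τ̲ := min{ v ∈ {0,...,N-1} : L_v ≥ 0 } ∧ N and τ̄ := min{ v ∈ {0,...,N-1} : L_v > 0 } ∧ N. If a stopping time τ* ∈ T_{0,N} satisfies τ̲ ≤ τ* ≤ τ̄ a.s. and, a.s. on the event {τ* ≤ N-1}, max_{0≤v≤τ*} L_v = L_{τ*}, then τ* is optimal: for every stopping time τ ∈ T_{0,N}, E_0[X_τ] ≤ E_0[X_{τ*}] a.s. -/

import Mathlib

/-! With `ξ_t := Σ_{u=t}^{N-1} max_{t≤v≤u} L_v + X_N` we have `X_t = E_t[ξ_t]`. Splitting a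
stopping time `σ` over the events `{σ = t} ∈ F_t`, the zero-one law and the tower property give
`E_0[X_σ] = E_0[ξ_σ]`, so by monotonicity it suffices to show `ξ_τ ≤ ξ_{τ*}` pathwise, which is
deterministic. By `τ* ≤ τ̄`, `L` is nonpositive before `τ*`, and by `τ̲ ≤ τ*` together with the
running-maximum condition, `L_{τ*} ≥ 0`. Hence for `u ≥ τ, τ*` the maximum over `[τ*, u]`
dominates the one over `[τ, u]`, while the terms `u ∈ [τ*, τ)` present only in `ξ_{τ*}` are
`≥ L_{τ*} ≥ 0` and the terms `u ∈ [τ, τ*)` present only in `ξ_τ` are `≤ 0`. -/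

open MeasureTheory Filter

/-- Running maximum `max_{t ≤ v ≤ u} L v ω` (intended for `t ≤ u`). -/
noncomputable def runMax {Ω : Type*} (L : ℕ → Ω → ℝ) (t u : ℕ) (ω : Ω) : ℝ :=
  (Finset.Icc t u).fold max (L t ω) fun v => L v ω

/-- Running minimum `min_{t ≤ v ≤ u} K v ω` (intended for `t ≤ u`). -/
noncomputable def runMin {Ω : Type*} (K : ℕ → Ω → ℝ) (t u : ℕ) (ω : Ω) : ℝ :=
  (Finset.Icc t u).fold min (K t ω) fun v => K v ω

/-- A discrete-time nonlinear expectation on the horizon `{0, ..., N}`: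
a family of maps `E t` sending square-integrable `F N`-measurable random
variables to square-integrable `F t`-measurable random variables, satisfying
monotonicity, strict monotonicity, translation invariance, the tower property,
the zero-one law and monotone convergence. -/
structure NLExp {Ω : Type*} {m0 : MeasurableSpace Ω} (μ : Measure Ω)
    (F : Filtration ℕ m0) (N : ℕ) where
  E : ℕ → (Ω → ℝ) → Ω → ℝ
  adapted : ∀ t, t ≤ N → ∀ ξ : Ω → ℝ, StronglyMeasurable[F N] ξ → MemLp ξ 2 μ →
    StronglyMeasurable[F t] (E t ξ)
  sqInt : ∀ t, t ≤ N → ∀ ξ : Ω → ℝ, StronglyMeasurable[F N] ξ → MemLp ξ 2 μ →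
    MemLp (E t ξ) 2 μ
  mono : ∀ t, t ≤ N → ∀ ξ η : Ω → ℝ, StronglyMeasurable[F N] ξ → MemLp ξ 2 μ →
    StronglyMeasurable[F N] η → MemLp η 2 μ → ξ ≤ᵐ[μ] η → E t ξ ≤ᵐ[μ] E t η
  strictMono : ∀ t, t ≤ N → ∀ ξ η : Ω → ℝ, StronglyMeasurable[F N] ξ → MemLp ξ 2 μ →
    StronglyMeasurable[F N] η → MemLp η 2 μ → ξ ≤ᵐ[μ] η →
    0 < μ {ω | ξ ω < η ω} → 0 < μ {ω | E t ξ ω < E t η ω}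
  translation : ∀ t, t ≤ N → ∀ ξ ζ : Ω → ℝ, StronglyMeasurable[F N] ξ → MemLp ξ 2 μ →
    StronglyMeasurable[F t] ζ → MemLp ζ 2 μ → E t (ξ + ζ) =ᵐ[μ] E t ξ + ζ
  tower : ∀ s t, s ≤ t → t ≤ N → ∀ ξ : Ω → ℝ, StronglyMeasurable[F N] ξ → MemLp ξ 2 μ →
    E s (E t ξ) =ᵐ[μ] E s ξ
  zeroOne : ∀ t, t ≤ N → ∀ ξ η : Ω → ℝ, StronglyMeasurable[F N] ξ → MemLp ξ 2 μ →
    StronglyMeasurable[F N] η → MemLp η 2 μ → ∀ A : Set Ω, MeasurableSet[F t] A →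
    E t (A.indicator ξ + Aᶜ.indicator η) =ᵐ[μ]
      A.indicator (E t ξ) + Aᶜ.indicator (E t η)
  monoConv : ∀ t, t ≤ N → ∀ (ξs : ℕ → Ω → ℝ) (ξ : Ω → ℝ),
    (∀ n, StronglyMeasurable[F N] (ξs n)) → (∀ n, MemLp (ξs n) 2 μ) →
    StronglyMeasurable[F N] ξ → MemLp ξ 2 μ →
    (∀ᵐ ω ∂μ, (Monotone fun n => ξs n ω) ∨ (Antitone fun n => ξs n ω)) →
    (∀ᵐ ω ∂μ, Tendsto (fun n => ξs n ω) atTop (nhds (ξ ω))) →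
    ∀ᵐ ω ∂μ, Tendsto (fun n => E t (ξs n) ω) atTop (nhds (E t ξ ω))

section RunMax

variable {Ω : Type*} (L : ℕ → Ω → ℝ)

theorem runMax_le_iff {t u : ℕ} (htu : t ≤ u) {ω : Ω} {c : ℝ} :
    runMax L t u ω ≤ c ↔ ∀ v ∈ Finset.Icc t u, L v ω ≤ c := by
  rw [runMax, Finset.fold_max_le]
  exact ⟨fun h => h.2, fun h => ⟨h t (Finset.mem_Icc.2 ⟨le_rfl, htu⟩), h⟩⟩

theorem le_runMax {t v u : ℕ} (hv : v ∈ Finset.Icc t u) (ω : Ω) : L v ω ≤ runMax L t u ω :=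
  (Finset.le_fold_max _).2 (Or.inr ⟨v, hv, le_rfl⟩)

theorem runMax_eq_sup' {t u : ℕ} (htu : t ≤ u) :
    runMax L t u = (Finset.Icc t u).sup' (Finset.nonempty_Icc.2 htu) L := by
  funext ω
  rw [Finset.sup'_apply]
  exact le_antisymm ((runMax_le_iff L htu).2 fun v hv => Finset.le_sup' (fun v => L v ω) hv)
    (Finset.sup'_le _ _ fun v hv => le_runMax L hv ω)

theorem stronglyMeasurable_runMax {m : MeasurableSpace Ω} {t u : ℕ} (htu : t ≤ u)
    (hL : ∀ v ∈ Finset.Icc t u, StronglyMeasurable[m] (L v)) :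
    StronglyMeasurable[m] (runMax L t u) := by
  rw [runMax_eq_sup' L htu]
  exact (Finset.measurable_sup' _ fun v hv => (hL v hv).measurable).stronglyMeasurable

theorem stronglyMeasurable_sum_runMax {m0 : MeasurableSpace Ω} {F : Filtration ℕ m0} {N t : ℕ}
    (hL : ∀ v < N, StronglyMeasurable[F v] (L v)) :
    StronglyMeasurable[F N] fun ω => ∑ u ∈ Finset.Ico t N, runMax L t u ω := by
  refine Finset.stronglyMeasurable_fun_sum _ fun u hu => ?_
  obtain ⟨htu, huN⟩ := Finset.mem_Ico.1 hu
  refine stronglyMeasurable_runMax L htu fun v hv => ?_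
  have hvN : v < N := (Finset.mem_Icc.1 hv).2.trans_lt huN
  exact (hL v hvN).mono (F.mono hvN.le)

theorem runMax_le_runMax_of_nonpos_of_nonneg {r s u : ℕ} {ω : Ω} (hru : r ≤ u) (hsu : s ≤ u)
    (hneg : ∀ v < s, L v ω ≤ 0) (hs : 0 ≤ L s ω) : runMax L r u ω ≤ runMax L s u ω := by
  refine (runMax_le_iff L hru).2 fun v hv => ?_
  rcases lt_or_ge v s with hvs | hsv
  · exact (hneg v hvs).trans (hs.trans (le_runMax L (Finset.mem_Icc.2 ⟨le_rfl, hsu⟩) ω))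
  · exact le_runMax L (Finset.mem_Icc.2 ⟨hsv, (Finset.mem_Icc.1 hv).2⟩) ω

theorem sum_runMax_le_of_nonpos_of_nonneg {N r s : ℕ} {ω : Ω} (hr : r ≤ N) (hs : s ≤ N)
    (hneg : ∀ v < s, L v ω ≤ 0) (hpos : s < N → 0 ≤ L s ω) :
    ∑ u ∈ Finset.Ico r N, runMax L r u ω ≤ ∑ u ∈ Finset.Ico s N, runMax L s u ω := by
  have htail : ∀ u ∈ Finset.Ico (max r s) N, runMax L r u ω ≤ runMax L s u ω := by
    intro u hu
    obtain ⟨hu, huN⟩ := Finset.mem_Ico.1 hu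
    exact runMax_le_runMax_of_nonpos_of_nonneg L (le_of_max_le_left hu) (le_of_max_le_right hu)
      hneg (hpos ((le_of_max_le_right hu).trans_lt huN))
  rcases le_total s r with hsr | hrs
  · rw [max_eq_left hsr] at htail
    rw [← Finset.sum_Ico_consecutive _ hsr hr]
    have hhead : 0 ≤ ∑ u ∈ Finset.Ico s r, runMax L s u ω := by
      refine Finset.sum_nonneg fun u hu => ?_
      obtain ⟨hsu, hur⟩ := Finset.mem_Ico.1 hu
      exact (hpos (hsu.trans_lt (hur.trans_le hr))).trans
        (le_runMax L (Finset.mem_Icc.2 ⟨le_rfl, hsu⟩) ω)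
    linarith [Finset.sum_le_sum htail]
  · rw [max_eq_right hrs] at htail
    rw [← Finset.sum_Ico_consecutive _ hrs hs]
    have hhead : ∑ u ∈ Finset.Ico r s, runMax L r u ω ≤ 0 := by
      refine Finset.sum_nonpos fun u hu => ?_
      obtain ⟨hru, hus⟩ := Finset.mem_Ico.1 hu
      exact (runMax_le_iff L hru).2 fun v hv => hneg v ((Finset.mem_Icc.1 hv).2.trans_lt hus)
    linarith [Finset.sum_le_sum htail]

end RunMax

section FirstHit

variable {p : ℕ → Prop} {N : ℕ}

theorem not_of_lt_sInf_union {v : ℕ} (hv : v < sInf ({v | v < N ∧ p v} ∪ {N})) : ¬p v :=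
  fun h => Nat.notMem_of_lt_sInf hv
    (Or.inl ⟨hv.trans_le (Nat.sInf_le (Or.inr rfl)), h⟩)

theorem of_sInf_union_lt (h : sInf ({v | v < N ∧ p v} ∪ {N}) < N) :
    p (sInf ({v | v < N ∧ p v} ∪ {N})) := by
  rcases Nat.sInf_mem (⟨N, Or.inr rfl⟩ : ({v | v < N ∧ p v} ∪ {N}).Nonempty) with h' | h'
  · exact h'.2
  · exact absurd (Set.mem_singleton_iff.1 h') h.ne

end FirstHit

theorem nonpos_before_and_nonneg_of_between {Ω : Type*} {L : ℕ → Ω → ℝ} {N s : ℕ} {ω : Ω}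
    (hlow : sInf ({v | v < N ∧ 0 ≤ L v ω} ∪ {N}) ≤ s)
    (hbar : s ≤ sInf ({v | v < N ∧ 0 < L v ω} ∪ {N}))
    (hmax : s < N → runMax L 0 s ω = L s ω) :
    (∀ v < s, L v ω ≤ 0) ∧ (s < N → 0 ≤ L s ω) := by
  refine ⟨fun v hv => not_lt.1 (not_of_lt_sInf_union (hv.trans_le hbar)), fun hsN => ?_⟩
  calc 0 ≤ L (sInf ({v | v < N ∧ 0 ≤ L v ω} ∪ {N})) ω := of_sInf_union_lt (hlow.trans_lt hsN)
    _ ≤ runMax L 0 s ω := le_runMax L (Finset.mem_Icc.2 ⟨Nat.zero_le _, hlow⟩) ω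
    _ = L s ω := hmax hsN

section StoppingTime

variable {Ω E : Type*} {m0 : MeasurableSpace Ω} {F : Filtration ℕ m0}
  {σ : Ω → ℕ} {N : ℕ}

theorem comp_eq_sum_indicator [AddCommMonoid E] (hσN : ∀ ω, σ ω ≤ N) (Y : ℕ → Ω → E) :
    (fun ω => Y (σ ω) ω) = ∑ t ∈ Finset.range (N + 1), {ω | σ ω = t}.indicator (Y t) := by
  funext ω
  rw [Finset.sum_apply, Finset.sum_eq_single_of_mem (σ ω)
    (Finset.mem_range.2 (Nat.lt_succ_of_le (hσN ω)))]
  · simp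
  · intro t _ ht
    exact Set.indicator_of_notMem (s := {ω | σ ω = t}) (Ne.symm ht) (Y t)

theorem MeasureTheory.IsStoppingTime.measurableSet_eq_nat
    (hσ : IsStoppingTime F fun ω => (σ ω : WithTop ℕ)) (t : ℕ) :
    MeasurableSet[F t] {ω | σ ω = t} := by
  simpa using hσ.measurableSet_eq t

theorem MeasureTheory.IsStoppingTime.stronglyMeasurable_comp [NormedAddCommGroup E]
    (hσ : IsStoppingTime F fun ω => (σ ω : WithTop ℕ)) (hσN : ∀ ω, σ ω ≤ N) {Y : ℕ → Ω → E}
    (hY : ∀ t ≤ N, StronglyMeasurable[F N] (Y t)) :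
    StronglyMeasurable[F N] fun ω => Y (σ ω) ω := by
  rw [comp_eq_sum_indicator hσN]
  refine Finset.stronglyMeasurable_sum _ fun t ht => ?_
  have htN : t ≤ N := Nat.lt_succ_iff.1 (Finset.mem_range.1 ht)
  exact (hY t htN).indicator (F.mono htN _ (hσ.measurableSet_eq_nat t))

theorem MeasureTheory.IsStoppingTime.memLp_comp [NormedAddCommGroup E]
    (hσ : IsStoppingTime F fun ω => (σ ω : WithTop ℕ)) (hσN : ∀ ω, σ ω ≤ N) {Y : ℕ → Ω → E}
    {p : ENNReal} {μ : Measure Ω} (hY : ∀ t ≤ N, MemLp (Y t) p μ) :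
    MemLp (fun ω => Y (σ ω) ω) p μ := by
  rw [comp_eq_sum_indicator hσN]
  refine memLp_finsetSum' _ fun t ht => ?_
  exact (hY t (Nat.lt_succ_iff.1 (Finset.mem_range.1 ht))).indicator
    (F.le t _ (hσ.measurableSet_eq_nat t))

def switchedValue (X ξ : ℕ → Ω → E) (σ : Ω → ℕ) (k : ℕ) : Ω → E :=
  fun ω => (if σ ω < k then ξ else X) (σ ω) ω

variable {X ξ : ℕ → Ω → E}

theorem switchedValue_zero : switchedValue X ξ σ 0 = fun ω => X (σ ω) ω := by
  funext ω
  simp [switchedValue]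

theorem switchedValue_eq_of_le (hσN : ∀ ω, σ ω ≤ N) (hξN : ξ N = X N) :
    switchedValue X ξ σ N = fun ω => ξ (σ ω) ω := by
  funext ω
  rcases (hσN ω).lt_or_eq with h | h
  · simp [switchedValue, h]
  · simp [switchedValue, h, hξN]

theorem switchedValue_eq_piecewise [AddZeroClass E] (k : ℕ) :
    switchedValue X ξ σ k =
      {ω | σ ω = k}.indicator (X k) + {ω | σ ω = k}ᶜ.indicator (switchedValue X ξ σ k) := by
  funext ω
  by_cases hω : σ ω = k <;> simp [switchedValue, hω]

theorem switchedValue_succ [AddZeroClass E] (k : ℕ) :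
    switchedValue X ξ σ (k + 1) =
      {ω | σ ω = k}.indicator (ξ k) + {ω | σ ω = k}ᶜ.indicator (switchedValue X ξ σ k) := by
  funext ω
  by_cases hω : σ ω = k
  · simp [switchedValue, hω]
  · have : σ ω < k + 1 ↔ σ ω < k := by omega
    simp [switchedValue, hω, this]

theorem MeasureTheory.IsStoppingTime.stronglyMeasurable_switchedValue [NormedAddCommGroup E]
    (hσ : IsStoppingTime F fun ω => (σ ω : WithTop ℕ)) (hσN : ∀ ω, σ ω ≤ N)
    (hX : ∀ t ≤ N, StronglyMeasurable[F N] (X t)) (hξ : ∀ t ≤ N, StronglyMeasurable[F N] (ξ t))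
    (k : ℕ) : StronglyMeasurable[F N] (switchedValue X ξ σ k) :=
  hσ.stronglyMeasurable_comp hσN (Y := fun t => (if t < k then ξ else X) t) fun t ht => by
    split_ifs
    exacts [hξ t ht, hX t ht]

theorem MeasureTheory.IsStoppingTime.memLp_switchedValue [NormedAddCommGroup E]
    (hσ : IsStoppingTime F fun ω => (σ ω : WithTop ℕ)) (hσN : ∀ ω, σ ω ≤ N)
    {p : ENNReal} {μ : Measure Ω} (hX : ∀ t ≤ N, MemLp (X t) p μ) (hξ : ∀ t ≤ N, MemLp (ξ t) p μ)
    (k : ℕ) : MemLp (switchedValue X ξ σ k) p μ :=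
  hσ.memLp_comp hσN (Y := fun t => (if t < k then ξ else X) t) fun t ht => by
    split_ifs
    exacts [hξ t ht, hX t ht]

end StoppingTime

namespace NLExp

variable {Ω : Type*} {m0 : MeasurableSpace Ω} {μ : Measure Ω} {F : Filtration ℕ m0} {N : ℕ}
  (EE : NLExp μ F N)

theorem E_zero {t : ℕ} (ht : t ≤ N) : EE.E t 0 =ᵐ[μ] 0 := by
  have h0 : StronglyMeasurable[F N] (0 : Ω → ℝ) := stronglyMeasurable_const
  have htrans := EE.translation t ht 0 (EE.E t 0) h0 MemLp.zero (EE.adapted t ht 0 h0 MemLp.zero)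
    (EE.sqInt t ht 0 h0 MemLp.zero)
  rw [zero_add] at htrans
  -- `E_t 0 = E_t (E_t 0) = E_t 0 + E_t 0` by the tower property and translation invariance
  filter_upwards [htrans, EE.tower t t le_rfl ht 0 h0 MemLp.zero] with ω h1 h2
  simp only [Pi.add_apply, Pi.zero_apply] at h1 ⊢
  linarith

theorem E_of_stronglyMeasurable {t : ℕ} (ht : t ≤ N) {ζ : Ω → ℝ}
    (hζ : StronglyMeasurable[F t] ζ) (hζ' : MemLp ζ 2 μ) : EE.E t ζ =ᵐ[μ] ζ := by
  have htrans := EE.translation t ht 0 ζ stronglyMeasurable_const MemLp.zero hζ hζ'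
  rw [zero_add] at htrans
  filter_upwards [htrans, EE.E_zero ht] with ω h1 h2
  rw [h1, Pi.add_apply, h2, Pi.zero_apply, zero_add]

theorem E_congr_ae {t : ℕ} (ht : t ≤ N) {ξ η : Ω → ℝ}
    (hξ : StronglyMeasurable[F N] ξ) (hξ' : MemLp ξ 2 μ)
    (hη : StronglyMeasurable[F N] η) (hη' : MemLp η 2 μ) (h : ξ =ᵐ[μ] η) :
    EE.E t ξ =ᵐ[μ] EE.E t η :=
  (EE.mono t ht ξ η hξ hξ' hη hη' h.le).antisymm (EE.mono t ht η ξ hη hη' hξ hξ' h.symm.le)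

theorem E_piecewise_congr {s t : ℕ} (hst : s ≤ t) (ht : t ≤ N) {A : Set Ω}
    (hA : MeasurableSet[F t] A) {ξ η ζ : Ω → ℝ}
    (hξ : StronglyMeasurable[F N] ξ) (hξ' : MemLp ξ 2 μ)
    (hη : StronglyMeasurable[F N] η) (hη' : MemLp η 2 μ)
    (hζ : StronglyMeasurable[F N] ζ) (hζ' : MemLp ζ 2 μ) (h : EE.E t ξ =ᵐ[μ] EE.E t η) :
    EE.E s (A.indicator ξ + Aᶜ.indicator ζ) =ᵐ[μ] EE.E s (A.indicator η + Aᶜ.indicator ζ) := by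
  have hAN : MeasurableSet[F N] A := F.mono ht _ hA
  have hA0 : MeasurableSet A := F.le N _ hAN
  have hmeas : ∀ {f : Ω → ℝ}, StronglyMeasurable[F N] f →
      StronglyMeasurable[F N] (A.indicator f + Aᶜ.indicator ζ) :=
    fun hf => (hf.indicator hAN).add (hζ.indicator hAN.compl)
  have hmemLp : ∀ {f : Ω → ℝ}, MemLp f 2 μ → MemLp (A.indicator f + Aᶜ.indicator ζ) 2 μ :=
    fun hf => (hf.indicator hA0).add (hζ'.indicator hA0.compl)
  have hinner : EE.E t (A.indicator ξ + Aᶜ.indicator ζ) =ᵐ[μ]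
      EE.E t (A.indicator η + Aᶜ.indicator ζ) := by
    filter_upwards [EE.zeroOne t ht ξ ζ hξ hξ' hζ hζ' A hA,
      EE.zeroOne t ht η ζ hη hη' hζ hζ' A hA, h] with ω h1 h2 h3
    rw [h1, h2]
    by_cases hω : ω ∈ A <;> simp [hω, h3]
  refine (EE.tower s t hst ht _ (hmeas hξ) (hmemLp hξ')).symm.trans
    (EE.E_congr_ae (hst.trans ht) ?_ ?_ ?_ ?_ hinner |>.trans
      (EE.tower s t hst ht _ (hmeas hη) (hmemLp hη')))
  · exact (EE.adapted t ht _ (hmeas hξ) (hmemLp hξ')).mono (F.mono ht)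
  · exact EE.sqInt t ht _ (hmeas hξ) (hmemLp hξ')
  · exact (EE.adapted t ht _ (hmeas hη) (hmemLp hη')).mono (F.mono ht)
  · exact EE.sqInt t ht _ (hmeas hη) (hmemLp hη')

theorem E_comp_stoppingTime_eq {X ξ : ℕ → Ω → ℝ}
    (hX : ∀ t ≤ N, StronglyMeasurable[F t] (X t)) (hX' : ∀ t ≤ N, MemLp (X t) 2 μ)
    (hξ : ∀ t ≤ N, StronglyMeasurable[F N] (ξ t)) (hξ' : ∀ t ≤ N, MemLp (ξ t) 2 μ)
    (hrep : ∀ t < N, X t =ᵐ[μ] EE.E t (ξ t)) (hξN : ξ N = X N)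
    {σ : Ω → ℕ} (hσ : IsStoppingTime F fun ω => (σ ω : WithTop ℕ)) (hσN : ∀ ω, σ ω ≤ N) :
    EE.E 0 (fun ω => X (σ ω) ω) =ᵐ[μ] EE.E 0 (fun ω => ξ (σ ω) ω) := by
  have hXN : ∀ t ≤ N, StronglyMeasurable[F N] (X t) := fun t ht => (hX t ht).mono (F.mono ht)
  -- Passing from `k` to `k + 1` changes the switched value only on `{σ = k} ∈ F k`,
  -- where `E_k[X_k] = X_k = E_k[ξ_k]`.
  have hstep : ∀ k < N, EE.E 0 (switchedValue X ξ σ k) =ᵐ[μ]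
      EE.E 0 (switchedValue X ξ σ (k + 1)) := fun k hk => by
    have hXk : EE.E k (X k) =ᵐ[μ] EE.E k (ξ k) :=
      (EE.E_of_stronglyMeasurable hk.le (hX k hk.le) (hX' k hk.le)).trans (hrep k hk)
    have := EE.E_piecewise_congr (Nat.zero_le k) hk.le (hσ.measurableSet_eq_nat k)
      (hXN k hk.le) (hX' k hk.le) (hξ k hk.le) (hξ' k hk.le)
      (hσ.stronglyMeasurable_switchedValue hσN hXN hξ k) (hσ.memLp_switchedValue hσN hX' hξ' k)
      hXk
    rwa [← switchedValue_eq_piecewise, ← switchedValue_succ] at this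
  have hchain : ∀ k ≤ N, EE.E 0 (switchedValue X ξ σ 0) =ᵐ[μ] EE.E 0 (switchedValue X ξ σ k) := by
    intro k
    induction k with
    | zero => exact fun _ => .rfl
    | succ k ih => exact fun hk => (ih (by omega)).trans (hstep k (by omega))
  rw [← switchedValue_zero, ← switchedValue_eq_of_le hσN hξN]
  exact hchain N le_rfl

end NLExp

theorem level_crossing_optimality_criterion_general
{Ω : Type*}
    [m0 : MeasurableSpace Ω]
    (μ : Measure Ω)
    (F : Filtration ℕ m0) (N : ℕ)
    (EE : NLExp μ F N)
(X : ℕ → Ω → ℝ)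
    (hX_adapted : ∀ t, t ≤ N → StronglyMeasurable[F t] (X t))
    (hX_sqInt : ∀ t, t ≤ N → MemLp (X t) 2 μ)
(L : ℕ → Ω → ℝ)
    (hL_adapted : ∀ t, t < N → StronglyMeasurable[F t] (L t))
    (hL_sqInt : ∀ t, t < N →
      MemLp (fun ω => ∑ u ∈ Finset.Ico t N, runMax L t u ω) 2 μ)
    (hL_rep : ∀ t, t < N →
      X t =ᵐ[μ] EE.E t fun ω => (∑ u ∈ Finset.Ico t N, runMax L t u ω) + X N ω)
    (τlow τbar : Ω → ℕ)
    (hτlow_def : ∀ ω, τlow ω = sInf ({v | v < N ∧ 0 ≤ L v ω} ∪ {N}))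
    (hτbar_def : ∀ ω, τbar ω = sInf ({v | v < N ∧ 0 < L v ω} ∪ {N}))
    (τstar : Ω → ℕ) (hτstar : IsStoppingTime F (fun ω => (τstar ω : WithTop ℕ))) (hτstar_le : ∀ ω, τstar ω ≤ N)
    (hbetween : ∀ᵐ ω ∂μ, τlow ω ≤ τstar ω ∧ τstar ω ≤ τbar ω)
    (hmax : ∀ᵐ ω ∂μ, τstar ω < N → runMax L 0 (τstar ω) ω = L (τstar ω) ω) :
    ∀ τ : Ω → ℕ, IsStoppingTime F (fun ω => (τ ω : WithTop ℕ)) → (∀ ω, τ ω ≤ N) →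
      EE.E 0 (fun ω => X (τ ω) ω) ≤ᵐ[μ] EE.E 0 fun ω => X (τstar ω) ω := by
  intro τ hτ hτN
  set ξ : ℕ → Ω → ℝ := fun t ω => (∑ u ∈ Finset.Ico t N, runMax L t u ω) + X N ω
  have hξN : ξ N = X N := by simp [ξ]
  have hξ : ∀ t ≤ N, StronglyMeasurable[F N] (ξ t) := fun t _ =>
    (stronglyMeasurable_sum_runMax L hL_adapted).add (hX_adapted N le_rfl)
  have hξ' : ∀ t ≤ N, MemLp (ξ t) 2 μ := fun t ht => by
    rcases ht.lt_or_eq with ht | rfl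
    · exact (hL_sqInt t ht).add (hX_sqInt N le_rfl)
    · exact hξN ▸ hX_sqInt t le_rfl
  have hE : ∀ σ : Ω → ℕ, IsStoppingTime F (fun ω => (σ ω : WithTop ℕ)) → (∀ ω, σ ω ≤ N) →
      EE.E 0 (fun ω => X (σ ω) ω) =ᵐ[μ] EE.E 0 (fun ω => ξ (σ ω) ω) := fun σ hσ hσN =>
    EE.E_comp_stoppingTime_eq hX_adapted hX_sqInt hξ hξ' hL_rep hξN hσ hσN
  have hle : (fun ω => ξ (τ ω) ω) ≤ᵐ[μ] fun ω => ξ (τstar ω) ω := by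
    filter_upwards [hbetween, hmax] with ω ⟨hlow, hbar⟩ hmaxω
    obtain ⟨hneg, hpos⟩ :=
      nonpos_before_and_nonneg_of_between (hτlow_def ω ▸ hlow) (hτbar_def ω ▸ hbar) hmaxω
    exact add_le_add_left (sum_runMax_le_of_nonpos_of_nonneg L (hτN ω) (hτstar_le ω) hneg hpos) _
  calc EE.E 0 (fun ω => X (τ ω) ω)
      =ᵐ[μ] EE.E 0 (fun ω => ξ (τ ω) ω) := hE τ hτ hτN
    _ ≤ᵐ[μ] EE.E 0 (fun ω => ξ (τstar ω) ω) :=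
      EE.mono 0 (Nat.zero_le N) _ _ (hτ.stronglyMeasurable_comp hτN hξ) (hτ.memLp_comp hτN hξ')
        (hτstar.stronglyMeasurable_comp hτstar_le hξ) (hτstar.memLp_comp hτstar_le hξ') hle
    _ =ᵐ[μ] EE.E 0 (fun ω => X (τstar ω) ω) := (hE τstar hτstar hτstar_le).symm

/-- **Optimality criterion via level-crossing.** With
`τ̲ := min{ v < N : L_v ≥ 0 } ∧ N` and `τ̄ := min{ v < N : L_v > 0 } ∧ N`, any
stopping time `τ*` with `τ̲ ≤ τ* ≤ τ̄` a.s. and `max_{0≤v≤τ*} L_v = L_{τ*}` a.s. on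
`{τ* ≤ N-1}` is optimal: `E 0 [X_τ] ≤ E 0 [X_{τ*}]` a.s. for every stopping time
`τ ∈ T_{0,N}`. -/
theorem level_crossing_optimality_criterion
{Ω : Type*} [TopologicalSpace Ω] [PolishSpace Ω]
    [m0 : MeasurableSpace Ω] [BorelSpace Ω]
    (μ : Measure Ω) [IsProbabilityMeasure μ]
    (F : Filtration ℕ m0) (N : ℕ) (hN : 1 ≤ N)
    (EE : NLExp μ F N)
(X : ℕ → Ω → ℝ)
    (hX_adapted : ∀ t, t ≤ N → StronglyMeasurable[F t] (X t))
    (hX_sqInt : ∀ t, t ≤ N → MemLp (X t) 2 μ)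
(L : ℕ → Ω → ℝ)
    (hL_adapted : ∀ t, t < N → StronglyMeasurable[F t] (L t))
    (hL_sqInt : ∀ t, t < N →
      MemLp (fun ω => ∑ u ∈ Finset.Ico t N, runMax L t u ω) 2 μ)
    (hL_rep : ∀ t, t < N →
      X t =ᵐ[μ] EE.E t fun ω => (∑ u ∈ Finset.Ico t N, runMax L t u ω) + X N ω)
    (τlow τbar : Ω → ℕ)
    (hτlow_def : ∀ ω, τlow ω = sInf ({v | v < N ∧ 0 ≤ L v ω} ∪ {N}))
    (hτbar_def : ∀ ω, τbar ω = sInf ({v | v < N ∧ 0 < L v ω} ∪ {N}))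
    (τstar : Ω → ℕ) (hτstar : IsStoppingTime F (fun ω => (τstar ω : WithTop ℕ))) (hτstar_le : ∀ ω, τstar ω ≤ N)
    (hbetween : ∀ᵐ ω ∂μ, τlow ω ≤ τstar ω ∧ τstar ω ≤ τbar ω)
    (hmax : ∀ᵐ ω ∂μ, τstar ω < N → runMax L 0 (τstar ω) ω = L (τstar ω) ω) :
    ∀ τ : Ω → ℕ, IsStoppingTime F (fun ω => (τ ω : WithTop ℕ)) → (∀ ω, τ ω ≤ N) →
      EE.E 0 (fun ω => X (τ ω) ω) ≤ᵐ[μ] EE.E 0 fun ω => X (τstar ω) ω :=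
  level_crossing_optimality_criterion_general (m0 := m0) μ F N EE X hX_adapted hX_sqInt L hL_adapted
    hL_sqInt hL_rep τlow τbar hτlow_def hτbar_def τstar hτstar hτstar_le hbetween hmax
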